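/- arXiv:1704.03510 — 4 statements merged into one kernel-verified Lean document; each statement's English description precedes it below -/
import Mathlib

section
/- Let q ∈ (0,1) and ν > -1 with 4(1-q)(1-q^ν) > q^ν. Then for every z in the open unit disk U, the normalized Jackson second q-Bessel function satisfies |h_ν^{(2)}(z;q)| ≤ 4(1-q)(1-q^ν) / (4(1-q)(1-q^ν) - q^ν). -/
open Complex

/-- q-Pochhammer symbol (a;q)_n = ∏_{k=1}^n (1 - a q^{k-1}). -/
noncomputable def qPoch (a q : ℝ) (n : ℕ) : ℝ :=
  ∏ k ∈ Finset.range n, (1 - a * q ^ k)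

/-- Coefficients of the normalized Jackson second q-Bessel function. -/
noncomputable def K (q ν : ℝ) (n : ℕ) : ℝ :=
  (-1) ^ n * q ^ ((n : ℝ) * ((n : ℝ) + ν)) /
    (4 ^ n * qPoch q q n * qPoch (q ^ (ν + 1)) q n)

/-- Normalized Jackson second q-Bessel function h_ν^{(2)}(z;q). -/
noncomputable def h2 (q ν : ℝ) (z : ℂ) : ℂ :=
  ∑' n : ℕ, (K q ν n : ℂ) * z ^ (n + 1)

/-- Derivative of the normalized Jackson second q-Bessel function. -/
noncomputable def h2' (q ν : ℝ) (z : ℂ) : ℂ :=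
  ∑' n : ℕ, ((n : ℂ) + 1) * (K q ν n : ℂ) * z ^ n

/-- m-th partial sum of h_ν^{(2)}(z;q). -/
noncomputable def h2p (q ν : ℝ) (m : ℕ) (z : ℂ) : ℂ :=
  z + ∑ n ∈ Finset.Icc 1 m, (K q ν n : ℂ) * z ^ (n + 1)

/-- Derivative of the m-th partial sum of h_ν^{(2)}(z;q). -/
noncomputable def h2p' (q ν : ℝ) (m : ℕ) (z : ℂ) : ℂ :=
  1 + ∑ n ∈ Finset.Icc 1 m, ((n : ℂ) + 1) * (K q ν n : ℂ) * z ^ n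

/-!
Each factor `1 - a q^k` of a q-Pochhammer symbol with `0 ≤ a ≤ b` is at least `1 - b`, so
`(q;q)_n ≥ (1-q)^n` and `(q^{ν+1};q)_n ≥ (1-q^ν)^n`; together with `q^{n(n+ν)} ≤ q^{nν}` this gives
`|K_n| ≤ rⁿ` for `r = q^ν / (4(1-q)(1-q^ν))`. The hypothesis says exactly `r < 1`, so on the closed
unit disk `|h_ν^{(2)}(z;q)| ≤ Σ rⁿ = 1/(1-r)`, which is the claimed bound.
-/

open Real

lemma one_sub_pow_le_qPoch {a b q : ℝ} (ha : 0 ≤ a) (hab : a ≤ b) (hb : b ≤ 1)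
    (hq0 : 0 ≤ q) (hq1 : q ≤ 1) (n : ℕ) : (1 - b) ^ n ≤ qPoch a q n := by
  calc (1 - b) ^ n = ∏ _k ∈ Finset.range n, (1 - b) := by simp
    _ ≤ qPoch a q n := by
      refine Finset.prod_le_prod (fun _ _ => sub_nonneg.2 hb) fun k _ => ?_
      have : a * q ^ k ≤ a := mul_le_of_le_one_right ha (pow_le_one₀ hq0 hq1)
      linarith

lemma abs_K_le {q ν : ℝ} (hq0 : 0 < q) (hq1 : q < 1) (hqν : q ^ ν < 1) (n : ℕ) :
    |K q ν n| ≤ (q ^ ν / (4 * (1 - q) * (1 - q ^ ν))) ^ n := by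
  have hq : (1 - q) ^ n ≤ qPoch q q n :=
    one_sub_pow_le_qPoch hq0.le le_rfl hq1.le hq0.le hq1.le n
  have hqν' : (1 - q ^ ν) ^ n ≤ qPoch (q ^ (ν + 1)) q n := by
    refine one_sub_pow_le_qPoch (rpow_nonneg hq0.le _) ?_ hqν.le hq0.le hq1.le n
    exact rpow_le_rpow_of_exponent_ge hq0 hq1.le (by linarith)
  have hnum : q ^ ((n : ℝ) * (n + ν)) ≤ (q ^ ν) ^ n := by
    rw [← rpow_natCast, ← rpow_mul hq0.le]
    exact rpow_le_rpow_of_exponent_ge hq0 hq1.le (by nlinarith [(n.cast_nonneg : (0 : ℝ) ≤ n)])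
  have h1q : 0 < 1 - q := sub_pos.2 hq1
  have h1qν : 0 < 1 - q ^ ν := sub_pos.2 hqν
  have hP1 : 0 < qPoch q q n := (pow_pos h1q n).trans_le hq
  have hP2 : 0 < qPoch (q ^ (ν + 1)) q n := (pow_pos h1qν n).trans_le hqν'
  have hden : 0 < 4 ^ n * qPoch q q n * qPoch (q ^ (ν + 1)) q n := by positivity
  rw [K, abs_div, abs_mul, abs_pow, abs_neg, abs_one, one_pow, one_mul,
    abs_of_pos (rpow_pos_of_pos hq0 _), abs_of_pos hden, div_pow, mul_pow, mul_pow]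
  gcongr

theorem stmt0_general (q ν : ℝ) (hq : q ∈ Set.Ioo (0 : ℝ) 1)
    (hc : 4 * (1 - q) * (1 - q ^ ν) > q ^ ν) :
    ∀ z : ℂ, ‖z‖ < 1 →
      ‖h2 q ν z‖ ≤ 4 * (1 - q) * (1 - q ^ ν) / (4 * (1 - q) * (1 - q ^ ν) - q ^ ν) := by
  intro z hz
  obtain ⟨hq0, hq1⟩ := hq
  have hpos : 0 < q ^ ν := rpow_pos_of_pos hq0 ν
  have hA : 0 < 4 * (1 - q) * (1 - q ^ ν) := hpos.trans hc
  have hqν : q ^ ν < 1 := by nlinarith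
  set r := q ^ ν / (4 * (1 - q) * (1 - q ^ ν))
  have hr0 : 0 ≤ r := by positivity
  have hr1 : r < 1 := (div_lt_one hA).2 hc
  have hterm (n : ℕ) : ‖(K q ν n : ℂ) * z ^ (n + 1)‖ ≤ r ^ n := by
    rw [norm_mul, norm_pow, norm_real, Real.norm_eq_abs]
    calc |K q ν n| * ‖z‖ ^ (n + 1) ≤ |K q ν n| :=
          mul_le_of_le_one_right (abs_nonneg _) (pow_le_one₀ (norm_nonneg z) hz.le)
      _ ≤ r ^ n := abs_K_le hq0 hq1 hqν n
  calc ‖h2 q ν z‖ ≤ (1 - r)⁻¹ := tsum_of_norm_bounded (hasSum_geometric_of_lt_one hr0 hr1) hterm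
    _ = _ := by rw [one_sub_div hA.ne', inv_div]

theorem stmt0 (q ν : ℝ) (hq : q ∈ Set.Ioo (0 : ℝ) 1) (hν : -1 < ν)
    (hc : 4 * (1 - q) * (1 - q ^ ν) > q ^ ν) :
    ∀ z : ℂ, ‖z‖ < 1 →
      ‖h2 q ν z‖ ≤ 4 * (1 - q) * (1 - q ^ ν) / (4 * (1 - q) * (1 - q ^ ν) - q ^ ν) :=
  stmt0_general q ν hq hc
end

section
/- Let q ∈ (0,1) and ν > -1 with (1-q)(1-q^ν) > √q. Then for every z in the open unit disk U, the derivative of the normalized Jackson third (Hahn–Exton) q-Bessel function satisfies |(h_ν^{(3)})'(z;q)| ≤ ((1-q)(1-q^ν) / ((1-q)(1-q^ν) - √q))^2, where (h_ν^{(3)})'(z;q) = Σ_{n≥0} (n+1) T_n z^{n}. -/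
open Complex

/-- Coefficients of the normalized Jackson third (Hahn-Exton) q-Bessel function. -/
noncomputable def T (q ν : ℝ) (n : ℕ) : ℝ :=
  (-1) ^ n * q ^ (((n : ℝ) * ((n : ℝ) + 1)) / 2) /
    (qPoch q q n * qPoch (q ^ (ν + 1)) q n)

/-- Normalized Jackson third (Hahn-Exton) q-Bessel function h_ν^{(3)}(z;q). -/
noncomputable def h3 (q ν : ℝ) (z : ℂ) : ℂ :=
  ∑' n : ℕ, (T q ν n : ℂ) * z ^ (n + 1)

/-- Derivative of the normalized Jackson third q-Bessel function. -/
noncomputable def h3' (q ν : ℝ) (z : ℂ) : ℂ :=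
  ∑' n : ℕ, ((n : ℂ) + 1) * (T q ν n : ℂ) * z ^ n

/-- m-th partial sum of h_ν^{(3)}(z;q). -/
noncomputable def h3p (q ν : ℝ) (m : ℕ) (z : ℂ) : ℂ :=
  z + ∑ n ∈ Finset.Icc 1 m, (T q ν n : ℂ) * z ^ (n + 1)

/-- Derivative of the m-th partial sum of h_ν^{(3)}(z;q). -/
noncomputable def h3p' (q ν : ℝ) (m : ℕ) (z : ℂ) : ℂ :=
  1 + ∑ n ∈ Finset.Icc 1 m, ((n : ℂ) + 1) * (T q ν n : ℂ) * z ^ n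

/-!
Every factor `1 - a q^k` of `(a;q)_n` is at least `1 - a`, so `(q;q)_n ≥ (1-q)^n` and
`(q^{ν+1};q)_n ≥ (1-q^ν)^n`, while `q^{n(n+1)/2} ≤ (√q)^n`. Hence `|T_n| ≤ r^n` with
`r = √q / ((1-q)(1-q^ν)) < 1`, and the derivative series is dominated by
`∑ (n+1) r^n = 1/(1-r)^2`, which is the claimed bound.
-/

theorem pow_one_sub_le_qPoch {a q : ℝ} (ha : 0 ≤ a) (ha1 : a ≤ 1) (hq0 : 0 ≤ q) (hq1 : q ≤ 1)
    (n : ℕ) : (1 - a) ^ n ≤ qPoch a q n := by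
  calc (1 - a) ^ n = ∏ _k ∈ Finset.range n, (1 - a) := by simp
    _ ≤ qPoch a q n := Finset.prod_le_prod (fun _ _ => sub_nonneg.mpr ha1) fun k _ =>
        sub_le_sub_left (mul_le_of_le_one_right ha (pow_le_one₀ hq0 hq1)) 1

theorem rpow_triangular_le_sqrt_pow {q : ℝ} (hq0 : 0 < q) (hq1 : q ≤ 1) (n : ℕ) :
    q ^ (((n : ℝ) * ((n : ℝ) + 1)) / 2) ≤ Real.sqrt q ^ n := by
  rw [Real.sqrt_eq_rpow, ← Real.rpow_natCast, ← Real.rpow_mul hq0.le]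
  apply Real.rpow_le_rpow_of_exponent_ge hq0 hq1
  have : (0 : ℝ) ≤ n := Nat.cast_nonneg n
  nlinarith

theorem abs_T_le {q ν : ℝ} (hq : q ∈ Set.Ioo (0 : ℝ) 1) (hν : 0 < 1 - q ^ ν) (n : ℕ) :
    |T q ν n| ≤ (Real.sqrt q / ((1 - q) * (1 - q ^ ν))) ^ n := by
  obtain ⟨hq0, hq1⟩ := hq
  have hqν : q ^ (ν + 1) ≤ q ^ ν :=
    Real.rpow_le_rpow_of_exponent_ge hq0 hq1.le (by linarith)
  have hP₁ : (1 - q) ^ n ≤ qPoch q q n :=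
    pow_one_sub_le_qPoch hq0.le hq1.le hq0.le hq1.le n
  have hP₂ : (1 - q ^ ν) ^ n ≤ qPoch (q ^ (ν + 1)) q n :=
    (pow_le_pow_left₀ hν.le (by linarith) n).trans <|
      pow_one_sub_le_qPoch (by positivity) (by linarith) hq0.le hq1.le n
  have hP : (1 - q) ^ n * (1 - q ^ ν) ^ n ≤ qPoch q q n * qPoch (q ^ (ν + 1)) q n :=
    mul_le_mul hP₁ hP₂ (by positivity) ((pow_pos (by linarith) n).le.trans hP₁)
  have hden : 0 < (1 - q) ^ n * (1 - q ^ ν) ^ n := by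
    have : 0 < 1 - q := by linarith
    positivity
  rw [T, abs_div, abs_mul, abs_pow, abs_neg, abs_one, one_pow, one_mul,
    abs_of_nonneg (by positivity), abs_of_pos (hden.trans_le hP), div_pow, mul_pow]
  exact div_le_div₀ (by positivity) (rpow_triangular_le_sqrt_pow hq0 hq1.le n) hden hP

theorem norm_tsum_succ_mul_le {E : Type*} [NormedRing E] [NormOneClass E] {a : ℕ → E} {r : ℝ}
    (hr : r < 1) (ha : ∀ n, ‖a n‖ ≤ r ^ n) {z : E} (hz : ‖z‖ ≤ 1) :
    ‖∑' n : ℕ, ((n : E) + 1) * a n * z ^ n‖ ≤ 1 / (1 - r) ^ 2 := by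
  have hr0 : 0 ≤ r := by simpa using (norm_nonneg _).trans (ha 1)
  have hsum : HasSum (fun n : ℕ => ((n : ℝ) + 1) * r ^ n) (1 / (1 - r) ^ 2) := by
    simpa [Nat.choose_one_right] using hasSum_choose_mul_geometric_of_norm_lt_one (𝕜 := ℝ) 1
      (by rwa [Real.norm_of_nonneg hr0] : ‖r‖ < 1)
  refine tsum_of_norm_bounded hsum fun n => ?_
  have hn : ‖(n : E) + 1‖ ≤ n + 1 := by
    simpa using Nat.norm_cast_le (α := E) (n + 1)
  calc ‖((n : E) + 1) * a n * z ^ n‖ ≤ ‖(n : E) + 1‖ * ‖a n‖ * ‖z‖ ^ n :=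
        (norm_mul₃_le ..).trans (mul_le_mul_of_nonneg_left (norm_pow_le _ _) (by positivity))
    _ ≤ (n + 1) * r ^ n * 1 := by
        gcongr
        · exact ha n
        · exact pow_le_one₀ (norm_nonneg z) hz
    _ = (n + 1) * r ^ n := mul_one _

theorem stmt3_general (q ν : ℝ) (hq : q ∈ Set.Ioo (0 : ℝ) 1)
    (hc : (1 - q) * (1 - q ^ ν) > Real.sqrt q) :
    ∀ z : ℂ, ‖z‖ < 1 →
      ‖h3' q ν z‖ ≤ ((1 - q) * (1 - q ^ ν) / ((1 - q) * (1 - q ^ ν) - Real.sqrt q)) ^ 2 := by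
  intro z hz
  set A := (1 - q) * (1 - q ^ ν)
  have hsq : 0 < Real.sqrt q := Real.sqrt_pos.mpr hq.1
  have hA : 0 < A := hsq.trans hc
  have hν : 0 < 1 - q ^ ν := pos_of_mul_pos_right hA (by linarith [hq.2])
  have hT : ∀ n, ‖(T q ν n : ℂ)‖ ≤ (Real.sqrt q / A) ^ n := fun n => by
    simpa only [Complex.norm_real, Real.norm_eq_abs] using abs_T_le hq hν n
  calc ‖h3' q ν z‖ ≤ 1 / (1 - Real.sqrt q / A) ^ 2 :=
        norm_tsum_succ_mul_le ((div_lt_one hA).mpr hc) hT hz.le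
    _ = (A / (A - Real.sqrt q)) ^ 2 := by
        rw [one_sub_div hA.ne', div_pow, div_pow, one_div_div]

theorem stmt3 (q ν : ℝ) (hq : q ∈ Set.Ioo (0 : ℝ) 1) (hν : -1 < ν)
    (hc : (1 - q) * (1 - q ^ ν) > Real.sqrt q) :
    ∀ z : ℂ, ‖z‖ < 1 →
      ‖h3' q ν z‖ ≤ ((1 - q) * (1 - q ^ ν) / ((1 - q) * (1 - q ^ ν) - Real.sqrt q)) ^ 2 :=
  stmt3_general q ν hq hc
end

section
/- Let q ∈ (0,1) and ν > -1 with 4(1-q)(1-q^ν) > q^ν. Then the coefficients K_n of the normalized Jackson second q-Bessel function satisfy Σ_{n≥1} |K_n| ≤ q^ν / (4(1-q)(1-q^ν) - q^ν); equivalently, ((4(1-q)(1-q^ν) - q^ν)/q^ν) · Σ_{n≥1} |K_n| ≤ 1. -/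
open Complex

lemma qPoch_q_ge (q : ℝ) (hq0 : 0 < q) (hq1 : q < 1) (n : ℕ) :
    (1 - q) ^ n ≤ qPoch q q n := by
  rw [qPoch, show (1-q)^n = ∏ _k ∈ Finset.range n, (1-q) by simp]
  apply Finset.prod_le_prod
  · intro k _; nlinarith [pow_pos hq0 1]
  · intro k _
    have : q * q ^ k ≤ q * 1 := mul_le_mul_of_nonneg_left (pow_le_one₀ hq0.le hq1.le) hq0.le
    rw [mul_one] at this
    linarith

lemma qPoch_nu_ge (q ν : ℝ) (hq0 : 0 < q) (hq1 : q < 1) (hν : 0 < 1 - q ^ ν) (n : ℕ) :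
    (1 - q ^ ν) ^ n ≤ qPoch (q ^ (ν + 1)) q n := by
  rw [qPoch, show (1-q^ν)^n = ∏ _k ∈ Finset.range n, (1-q^ν) by simp]
  apply Finset.prod_le_prod
  · intro k _; linarith
  · intro k _
    have h1 : q ^ (ν + 1) * q ^ k = q ^ (ν + 1 + k) := by
      rw [← Real.rpow_natCast q k, ← Real.rpow_add hq0]
    have h2 : q ^ (ν + 1 + (k:ℝ)) ≤ q ^ ν := by
      apply Real.rpow_le_rpow_of_exponent_ge hq0 hq1.le
      have : (0:ℝ) ≤ k := Nat.cast_nonneg k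
      linarith
    rw [h1]; linarith

lemma Kbound (q ν : ℝ) (hq0 : 0 < q) (hq1 : q < 1) (hν : 0 < 1 - q ^ ν) (n : ℕ) :
    |K q ν n| ≤ (q ^ ν / (4 * (1 - q) * (1 - q ^ ν))) ^ n := by
  have hqν : (0:ℝ) < q ^ ν := Real.rpow_pos_of_pos hq0 ν
  have hP1 : 0 < qPoch q q n := lt_of_lt_of_le (pow_pos (by linarith) n) (qPoch_q_ge q hq0 hq1 n)
  have hP2 : 0 < qPoch (q ^ (ν + 1)) q n :=
    lt_of_lt_of_le (pow_pos hν n) (qPoch_nu_ge q ν hq0 hq1 hν n)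
  have hA : |K q ν n| = q ^ ((n : ℝ) * ((n : ℝ) + ν)) /
      (4 ^ n * qPoch q q n * qPoch (q ^ (ν + 1)) q n) := by
    rw [K, abs_div, abs_mul, _root_.abs_pow, abs_neg, abs_one, one_pow, one_mul,
      abs_of_pos (Real.rpow_pos_of_pos hq0 _),
      abs_of_pos (by positivity)]
  rw [hA, div_pow]
  have hnum : q ^ ((n : ℝ) * ((n : ℝ) + ν)) ≤ (q ^ ν) ^ n := by
    have : (q ^ ν) ^ n = q ^ (ν * n) := by
      rw [← Real.rpow_natCast (q ^ ν) n, ← Real.rpow_mul hq0.le]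
    rw [this]
    apply Real.rpow_le_rpow_of_exponent_ge hq0 hq1.le
    have hn : (0:ℝ) ≤ (n:ℝ) := Nat.cast_nonneg n
    nlinarith
  have hden : (4 * (1 - q) * (1 - q ^ ν)) ^ n ≤ 4 ^ n * qPoch q q n * qPoch (q ^ (ν + 1)) q n := by
    have := qPoch_q_ge q hq0 hq1 n
    have := qPoch_nu_ge q ν hq0 hq1 hν n
    calc (4 * (1 - q) * (1 - q ^ ν)) ^ n = 4 ^ n * (1 - q) ^ n * (1 - q ^ ν) ^ n := by
          rw [mul_pow, mul_pow]
      _ ≤ 4 ^ n * qPoch q q n * qPoch (q ^ (ν + 1)) q n := by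
          apply mul_le_mul
          · apply mul_le_mul_of_nonneg_left (qPoch_q_ge q hq0 hq1 n) (by positivity)
          · exact qPoch_nu_ge q ν hq0 hq1 hν n
          · exact pow_nonneg hν.le n
          · positivity
  exact div_le_div₀ (pow_nonneg hqν.le n) hnum
    (pow_pos (by nlinarith) n) hden

theorem stmt12 (q ν : ℝ) (hq : q ∈ Set.Ioo (0 : ℝ) 1) (hν : -1 < ν)
    (hc : 4 * (1 - q) * (1 - q ^ ν) > q ^ ν) :
    ∑' n : ℕ, |K q ν (n + 1)| ≤ q ^ ν / (4 * (1 - q) * (1 - q ^ ν) - q ^ ν) := by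
  obtain ⟨hq0, hq1⟩ := hq
  have hqν : 0 < q ^ ν := Real.rpow_pos_of_pos hq0 ν
  have hν' : 0 < 1 - q ^ ν := by
    by_contra h
    push_neg at h
    have : 4 * (1 - q) * (1 - q ^ ν) ≤ 0 := by nlinarith
    linarith
  have hA : 0 < 4 * (1 - q) * (1 - q ^ ν) := by nlinarith
  set r := q ^ ν / (4 * (1 - q) * (1 - q ^ ν)) with hr
  have hr0 : 0 ≤ r := by positivity
  have hr1 : r < 1 := (div_lt_one hA).mpr hc
  have hgeo : Summable (fun n : ℕ => r ^ (n + 1)) := by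
    simpa [pow_succ'] using (summable_geometric_of_lt_one hr0 hr1).mul_left r
  have hb : ∀ n : ℕ, |K q ν (n + 1)| ≤ r ^ (n + 1) :=
    fun n => Kbound q ν hq0 hq1 hν' (n + 1)
  have hs : Summable (fun n => |K q ν (n + 1)|) :=
    Summable.of_nonneg_of_le (fun n => abs_nonneg _) hb hgeo
  calc ∑' n : ℕ, |K q ν (n + 1)| ≤ ∑' n : ℕ, r ^ (n + 1) := Summable.tsum_le_tsum hb hs hgeo
    _ = r * ∑' n : ℕ, r ^ n := by rw [← tsum_mul_left]; simp [pow_succ']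
    _ = r * (1 - r)⁻¹ := by rw [tsum_geometric_of_lt_one hr0 hr1]
    _ = q ^ ν / (4 * (1 - q) * (1 - q ^ ν) - q ^ ν) := by
      rw [hr]
      have h1 : (4 * (1 - q) * (1 - q ^ ν) - q ^ ν) ≠ 0 := by linarith
      have h2 : (4 * (1 - q) * (1 - q ^ ν)) ≠ 0 := ne_of_gt hA
      field_simp
end

section
/- Let q ∈ (0,1) and ν > -1 with (1-q)(1-q^ν) > √q. Then the coefficients T_n of the normalized Jackson third (Hahn–Exton) q-Bessel function satisfy Σ_{n≥1} |T_n| ≤ √q / ((1-q)(1-q^ν) - √q); equivalently, (((1-q)(1-q^ν) - √q)/√q) · Σ_{n≥1} |T_n| ≤ 1. -/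
open Complex

theorem stmt14 (q ν : ℝ) (hq : q ∈ Set.Ioo (0 : ℝ) 1) (hν : -1 < ν)
    (hc : (1 - q) * (1 - q ^ ν) > Real.sqrt q) :
    ∑' n : ℕ, |T q ν (n + 1)| ≤ Real.sqrt q / ((1 - q) * (1 - q ^ ν) - Real.sqrt q) := by
  obtain ⟨hq0, hq1⟩ := hq
  set c : ℝ := (1 - q) * (1 - q ^ ν) with hcdef
  have hsq : 0 < Real.sqrt q := Real.sqrt_pos.mpr hq0
  have hcpos : 0 < c := lt_trans hsq hc
  have h1q : 0 < 1 - q := by linarith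
  have hqν : 0 < 1 - q ^ ν := by
    by_contra h
    push_neg at h
    nlinarith
  have hqνlt : q ^ ν < 1 := by linarith
  set r : ℝ := Real.sqrt q / c with hrdef
  have hr0 : 0 ≤ r := div_nonneg hsq.le hcpos.le
  have hr1 : r < 1 := (div_lt_one hcpos).mpr hc
  have hfac : ∀ k : ℕ, q ^ (ν + 1) * q ^ k ≤ q ^ ν := by
    intro k
    have he : q ^ (ν + 1) = q ^ ν * q := by
      rw [Real.rpow_add hq0, Real.rpow_one]
    have hν0 : (0 : ℝ) < q ^ ν := Real.rpow_pos_of_pos hq0 ν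
    have hk1 : q ^ k ≤ 1 := pow_le_one₀ hq0.le hq1.le
    have hk0 : (0 : ℝ) ≤ q ^ k := pow_nonneg hq0.le k
    have h : q * q ^ k ≤ 1 := by nlinarith
    calc q ^ (ν + 1) * q ^ k = q ^ ν * (q * q ^ k) := by rw [he]; ring
      _ ≤ q ^ ν * 1 := mul_le_mul_of_nonneg_left h hν0.le
      _ = q ^ ν := mul_one _
  have hfacq : ∀ k : ℕ, q * q ^ k ≤ q := by
    intro k
    have hk1 : q ^ k ≤ 1 := pow_le_one₀ hq0.le hq1.le
    nlinarith
  have key : ∀ n : ℕ, |T q ν n| ≤ r ^ n := by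
    intro n
    have hP1pos : 0 < qPoch q q n := by
      apply Finset.prod_pos
      intro k _
      have := hfacq k
      linarith
    have hP2pos : 0 < qPoch (q ^ (ν + 1)) q n := by
      apply Finset.prod_pos
      intro k _
      have := hfac k
      linarith
    have hP1 : (1 - q) ^ n ≤ qPoch q q n := by
      have h0 : (1 - q) ^ n = ∏ _k ∈ Finset.range n, (1 - q) := by
        rw [Finset.prod_const, Finset.card_range]
      rw [h0]
      apply Finset.prod_le_prod
      · intro k _; exact h1q.le
      · intro k _; have := hfacq k; linarith
    have hP2 : (1 - q ^ ν) ^ n ≤ qPoch (q ^ (ν + 1)) q n := by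
      have h0 : (1 - q ^ ν) ^ n = ∏ _k ∈ Finset.range n, (1 - q ^ ν) := by
        rw [Finset.prod_const, Finset.card_range]
      rw [h0]
      apply Finset.prod_le_prod
      · intro k _; exact hqν.le
      · intro k _; have := hfac k; linarith
    have hApos : (0 : ℝ) < q ^ (((n : ℝ) * ((n : ℝ) + 1)) / 2) := Real.rpow_pos_of_pos hq0 _
    have habs : |T q ν n| = q ^ (((n : ℝ) * ((n : ℝ) + 1)) / 2) /
        (qPoch q q n * qPoch (q ^ (ν + 1)) q n) := by
      rw [T, abs_div, abs_mul, _root_.abs_pow, abs_neg, abs_one, one_pow, one_mul,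
        abs_of_pos hApos, abs_of_pos (mul_pos hP1pos hP2pos)]
    rw [habs]
    have hnum : q ^ (((n : ℝ) * ((n : ℝ) + 1)) / 2) ≤ Real.sqrt q ^ n := by
      have h2 : (Real.sqrt q) ^ n = q ^ ((n : ℝ) / 2) := by
        rw [Real.sqrt_eq_rpow, ← Real.rpow_natCast (q ^ ((1:ℝ)/2)) n,
          ← Real.rpow_mul hq0.le]
        ring_nf
      rw [h2]
      apply Real.rpow_le_rpow_of_exponent_ge hq0 hq1.le
      have hn0 : (0 : ℝ) ≤ (n : ℝ) := Nat.cast_nonneg n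
      nlinarith
    have hden : c ^ n ≤ qPoch q q n * qPoch (q ^ (ν + 1)) q n := by
      rw [hcdef, mul_pow]
      exact mul_le_mul hP1 hP2 (pow_nonneg hqν.le n) hP1pos.le
    calc q ^ (((n : ℝ) * ((n : ℝ) + 1)) / 2) / (qPoch q q n * qPoch (q ^ (ν + 1)) q n)
        ≤ Real.sqrt q ^ n / c ^ n :=
          div_le_div₀ (by positivity) hnum (pow_pos hcpos n) hden
      _ = r ^ n := by rw [hrdef, div_pow]
  have hsumgeo : Summable (fun n : ℕ => r ^ (n + 1)) := by
    simpa [pow_succ, mul_comm] using (summable_geometric_of_lt_one hr0 hr1).mul_left r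
  have hsummable : Summable (fun n : ℕ => |T q ν (n + 1)|) :=
    Summable.of_nonneg_of_le (fun n => abs_nonneg _) (fun n => key (n + 1)) hsumgeo
  have hle : ∑' n : ℕ, |T q ν (n + 1)| ≤ ∑' n : ℕ, r ^ (n + 1) :=
    Summable.tsum_le_tsum (fun n => key (n + 1)) hsummable hsumgeo
  have hgeo : ∑' n : ℕ, r ^ (n + 1) = r * (1 - r)⁻¹ := by
    have h0 : ∀ n : ℕ, r ^ (n + 1) = r * r ^ n := fun n => by ring
    rw [tsum_congr h0, tsum_mul_left, tsum_geometric_of_lt_one hr0 hr1]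
  have hfinal : r * (1 - r)⁻¹ = Real.sqrt q / (c - Real.sqrt q) := by
    rw [hrdef]
    have h1r : (0:ℝ) < c - Real.sqrt q := by linarith
    have h2 : 1 - Real.sqrt q / c = (c - Real.sqrt q) / c := by field_simp
    rw [h2]
    field_simp
  rw [hgeo, hfinal] at hle
  exact hle
end
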